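/- Fix a finite subset Λ of the locally finite connected infinite graph G=(V,E), a vertex x∈Λ, a real θ>1 and p,q∈[0,1] with p+q=1. Let g:Ω_Λ→ℝ be given by g(σ)=θ^{ξ^x(σ)}. Then for every σ∈Ω_Λ one has the pointwise bound (L_Λ g)(σ) ≤ ((θ−1)/θ)·( (pθ−q)·g(σ) + q ). -/

import Mathlib

open scoped Classical

noncomputable section

namespace FA1f

variable {V : Type*} [DecidableEq V]

/-- Configurations on a finite set `Λ` of vertices: `Ω_Λ = {0,1}^Λ`
(`false` = empty site, `true` = filled site). -/
abbrev Conf (Λ : Finset V) : Type _ := {x : V // x ∈ Λ} → Bool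

/-- Bernoulli weight of a single spin: `p` for a filled site, `q` for an empty one. -/
def bw (p q : ℝ) (b : Bool) : ℝ := if b then p else q

/-- Weight of a configuration under the product Bernoulli(`p`) measure `μ_Λ`. -/
def wt (p q : ℝ) (Λ : Finset V) (σ : Conf Λ) : ℝ := ∏ x, bw p q (σ x)

/-- Expectation `μ_Λ(f)` under the product Bernoulli(`p`) measure. -/
def mean (p q : ℝ) (Λ : Finset V) (f : Conf Λ → ℝ) : ℝ := ∑ σ, wt p q Λ σ * f σ

/-- Variance `Var_{μ_Λ}(f)`. -/
def variance (p q : ℝ) (Λ : Finset V) (f : Conf Λ → ℝ) : ℝ :=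
  mean p q Λ (fun σ => f σ ^ 2) - (mean p q Λ f) ^ 2

/-- The single-site conditional variance `Var_x(f)(σ)`. -/
def varAt (p q : ℝ) (Λ : Finset V) (x : {x : V // x ∈ Λ}) (f : Conf Λ → ℝ) (σ : Conf Λ) : ℝ :=
  (p * f (Function.update σ x true) ^ 2 + q * f (Function.update σ x false) ^ 2) -
    (p * f (Function.update σ x true) + q * f (Function.update σ x false)) ^ 2

/-- `σ^x` : the configuration `σ` flipped at `x`. -/
def flipAt (Λ : Finset V) (σ : Conf Λ) (x : {x : V // x ∈ Λ}) : Conf Λ :=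
  Function.update σ x (! σ x)

/-- FA1f constraint `c^η_{x,Λ}(σ)` with boundary condition `η : V → Bool` (as a `0/1` number):
some neighbour of `x` is empty in the configuration equal to `σ` on `Λ` and `η` outside. -/
def constr (G : SimpleGraph V) (Λ : Finset V) (η : V → Bool) (x : {x : V // x ∈ Λ})
    (σ : Conf Λ) : ℝ :=
  if ∃ y, G.Adj ↑x y ∧ (if h : y ∈ Λ then σ ⟨y, h⟩ = false else η y = false) then 1 else 0

/-- Flip rate `q·σ(x) + p·(1−σ(x))`. -/
def rate (p q : ℝ) (Λ : Finset V) (σ : Conf Λ) (x : {x : V // x ∈ Λ}) : ℝ :=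
  if σ x then q else p

/-- The FA1f generator `L_Λ` in volume `Λ` with boundary condition `η`, as an operator. -/
def gen (G : SimpleGraph V) (Λ : Finset V) (p q : ℝ) (η : V → Bool) (f : Conf Λ → ℝ)
    (σ : Conf Λ) : ℝ :=
  ∑ x, constr G Λ η x σ * rate p q Λ σ x * (f (flipAt Λ σ x) - f σ)

/-- The FA1f generator `L_Λ` in volume `Λ` with boundary condition `η`, as a matrix. -/
def genMat (G : SimpleGraph V) (Λ : Finset V) (p q : ℝ) (η : V → Bool) :
    Matrix (Conf Λ) (Conf Λ) ℝ := fun σ τ =>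
  (∑ x, constr G Λ η x σ * rate p q Λ σ x * (if τ = flipAt Λ σ x then 1 else 0)) -
    (if τ = σ then ∑ x, constr G Λ η x σ * rate p q Λ σ x else 0)

/-- The FA1f Markov semigroup `exp(t L_Λ)` applied to `f`. -/
def semigroup (G : SimpleGraph V) (Λ : Finset V) (p q : ℝ) (η : V → Bool) (t : ℝ)
    (f : Conf Λ → ℝ) : Conf Λ → ℝ :=
  (NormedSpace.exp (t • genMat G Λ p q η)).mulVec f

/-- Empty boundary condition. -/
def emptyBC : V → Bool := fun _ => false

/-- Completely filled boundary condition `ω`. -/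
def fullBC : V → Bool := fun _ => true

/-- The boundary condition `ω^{(z)}`: filled everywhere except at `z`. -/
def minBC (z : V) : V → Bool := fun v => if v = z then false else true

/-- `σ` has at least one empty site in `Λ`. -/
def hasZero (Λ : Finset V) (σ : Conf Λ) : Prop := ∃ x, σ x = false

/-- The conditional expectation `μ̂_Λ(f) = μ_Λ(f | Ω̂_Λ)` on the ergodic component
`Ω̂_Λ = {σ : at least one empty site}`. -/
def hatMean (p q : ℝ) (Λ : Finset V) (f : Conf Λ → ℝ) : ℝ :=
  mean p q Λ (fun σ => if hasZero Λ σ then f σ else 0) /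
    mean p q Λ (fun σ => if hasZero Λ σ then 1 else 0)

/-- The variance `Var_{μ̂_Λ}(f)` with respect to the conditional measure `μ̂_Λ`. -/
def hatVar (p q : ℝ) (Λ : Finset V) (f : Conf Λ → ℝ) : ℝ :=
  hatMean p q Λ (fun σ => f σ ^ 2) - (hatMean p q Λ f) ^ 2

/-- The entropy `Ent_{μ̂_Λ}(g)` of a (nonnegative) function `g` w.r.t. `μ̂_Λ`. -/
def hatEnt (p q : ℝ) (Λ : Finset V) (g : Conf Λ → ℝ) : ℝ :=
  hatMean p q Λ (fun σ => g σ * Real.log (g σ)) -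
    hatMean p q Λ g * Real.log (hatMean p q Λ g)

/-- The constraint `ĉ_x(σ) = c^ω_{x,Λ}(σ)·1_{σ^x ∈ Ω̂_Λ}` of the FA1f chain restricted to the
ergodic component, with filled boundary condition. -/
def chat (G : SimpleGraph V) (Λ : Finset V) (x : {x : V // x ∈ Λ}) (σ : Conf Λ) : ℝ :=
  constr G Λ fullBC x σ * (if hasZero Λ (flipAt Λ σ x) then 1 else 0)

/-- `(k,D)`-polynomial growth: every ball of radius `r ≥ 1` has at most `k·r^D` vertices. -/
def PolyGrowth (G : SimpleGraph V) (k D : ℝ) : Prop :=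
  ∀ r : ℕ, 1 ≤ r → ∀ x : V, (({y : V | G.dist x y ≤ r}).ncard : ℝ) ≤ k * (r : ℝ) ^ D

/-- A finite set of vertices is connected if the induced subgraph is connected. -/
def FinConnected (G : SimpleGraph V) (A : Finset V) : Prop :=
  (G.induce (A : Set V)).Connected

/-- The outer boundary `∂A`. -/
def outerBoundary (G : SimpleGraph V) (A : Finset V) : Set V :=
  {z | z ∉ A ∧ ∃ y ∈ A, G.Adj z y}

/-- `ξ^x(σ)`: distance from `x` to the nearest empty site, the configuration `σ` on `Λ`
being extended by zeros outside `Λ`. -/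
def xi (G : SimpleGraph V) (Λ : Finset V) (x : V) (σ : Conf Λ) : ℕ :=
  sInf {n | ∃ y : V, (∀ h : y ∈ Λ, σ ⟨y, h⟩ = false) ∧ G.dist x y = n}

/-- The average of `f` over the coordinates lying in `S`, the coordinates outside `S`
being fixed to their values in `σ` (the conditional expectation `μ_S(f)`). -/
def avgOver (p q : ℝ) (Λ S : Finset V) (f : Conf Λ → ℝ) (σ : Conf Λ) : ℝ :=
  ∑ τ : {x : V // x ∈ S} → Bool, (∏ y, bw p q (τ y)) *
    f (fun x => if h : ↑x ∈ S then τ ⟨↑x, h⟩ else σ x)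

/-- The variance of `f` over the coordinates lying in `S` (the conditional variance
`Var_{μ_S}(f)`), as a function of the remaining coordinates. -/
def varOver (p q : ℝ) (Λ S : Finset V) (f : Conf Λ → ℝ) (σ : Conf Λ) : ℝ :=
  avgOver p q Λ S (fun ρ => f ρ ^ 2) σ - (avgOver p q Λ S f σ) ^ 2

/-
Write `ξ = ξ^x(σ)` and `g = θ^ξ`. Making a filled site empty never increases `ξ`, and making an
empty site `z` filled can increase it only if `z` is the unique closest empty site, in which case
`ξ` grows by at most one when the constraint at `z` holds (a neighbour of `z` is empty). So at most
one summand of `(L_Λ g)(σ)` is positive, and it is at most `p θ^ξ (θ - 1)`. If moreover `ξ ≥ 1`,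
the filled neighbour of a closest empty site on a geodesic towards `x` is allowed to flip and
contributes at most `q (θ^(ξ-1) - θ^ξ)`. The total `p θ^ξ (θ - 1) + q (θ^(ξ-1) - θ^ξ)` falls
short of the right-hand side by `q (θ - 1) / θ`; for `ξ = 0` the bound `p (θ - 1)` is exactly
the right-hand side.
-/

lemma _root_.Finset.sum_le_of_le_of_subsingleton_pos {ι M : Type*} [AddCommMonoid M]
    [LinearOrder M] [IsOrderedAddMonoid M] (s : Finset ι) {T : ι → M} {A : M} (hA : 0 ≤ A)
    (hle : ∀ z ∈ s, T z ≤ A) (hpos : {z | 0 < T z}.Subsingleton) :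
    ∑ z ∈ s, T z ≤ A := by
  by_cases hex : ∃ z ∈ s, 0 < T z
  · obtain ⟨z, hz, hTz⟩ := hex
    have hrest : ∑ w ∈ s.erase z, T w ≤ 0 := by
      refine Finset.sum_nonpos fun w hw => not_lt.1 fun hTw => ?_
      exact Finset.ne_of_mem_erase hw (hpos hTw hTz)
    rw [← Finset.add_sum_erase s T hz]
    exact add_le_of_le_of_nonpos (hle z hz) hrest
  · simp only [not_exists, not_and, not_lt] at hex
    exact (Finset.sum_nonpos hex).trans hA

lemma _root_.SimpleGraph.exists_adj_dist_lt {W : Type*} {G : SimpleGraph W} {u v : W}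
    (h : G.dist u v ≠ 0) : ∃ w, G.Adj v w ∧ G.dist u w < G.dist u v := by
  rw [SimpleGraph.dist_comm] at h
  obtain ⟨p, hp⟩ := SimpleGraph.exists_walk_of_dist_ne_zero h
  cases p with
  | nil => simp at h
  | cons hadj q =>
    refine ⟨_, hadj, ?_⟩
    have hq := G.dist_le q.reverse
    rw [SimpleGraph.Walk.length_reverse] at hq
    rw [SimpleGraph.Walk.length_cons, SimpleGraph.dist_comm] at hp
    omega

section

variable {W : Type*} {G : SimpleGraph W} {Λ : Finset W} {x y : W} {σ : Conf Λ}

def Vacant (σ : Conf Λ) (y : W) : Prop :=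
  ∀ h : y ∈ Λ, σ ⟨y, h⟩ = false

lemma vacant_of_eq_false {z : {x : W // x ∈ Λ}} (h : σ z = false) : Vacant σ z := fun _ => h

lemma rate_nonneg {p q : ℝ} {z : {x : W // x ∈ Λ}} (hp : 0 ≤ p) (hq : 0 ≤ q) :
    0 ≤ rate p q Λ σ z := by
  unfold rate; split_ifs <;> assumption

lemma xi_le_dist (hy : Vacant σ y) : xi G Λ x σ ≤ G.dist x y :=
  Nat.sInf_le ⟨y, hy, rfl⟩

lemma exists_vacant_dist_eq_xi [Infinite W] (G : SimpleGraph W) (x : W) (σ : Conf Λ) :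
    ∃ y, Vacant σ y ∧ G.dist x y = xi G Λ x σ := by
  obtain ⟨y, hy⟩ := Infinite.exists_notMem_finset Λ
  exact Nat.sInf_mem (s := {n | ∃ y, Vacant σ y ∧ G.dist x y = n})
    ⟨G.dist x y, y, fun h => absurd h hy, rfl⟩

end

def genSummand (G : SimpleGraph V) (Λ : Finset V) (p q : ℝ) (η : V → Bool) (f : Conf Λ → ℝ)
    (σ : Conf Λ) (z : {x : V // x ∈ Λ}) : ℝ :=
  constr G Λ η z σ * rate p q Λ σ z * (f (flipAt Λ σ z) - f σ)

section

variable {G : SimpleGraph V} {Λ : Finset V} {p q θ : ℝ} {η : V → Bool} {f : Conf Λ → ℝ}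
  {x y : V} {σ : Conf Λ} {z : {x : V // x ∈ Λ}}

lemma Vacant.flipAt_of_ne (hy : Vacant σ y) (hyz : y ≠ z) : Vacant (flipAt Λ σ z) y := by
  intro h
  rw [flipAt, Function.update_of_ne fun e => hyz (congrArg Subtype.val e)]
  exact hy h

lemma vacant_flipAt_self (hz : σ z = true) : Vacant (flipAt Λ σ z) z := by
  intro _
  simp [flipAt, hz]

lemma Vacant.flipAt_of_eq_true (hy : Vacant σ y) (hz : σ z = true) : Vacant (flipAt Λ σ z) y := by
  obtain rfl | hyz := eq_or_ne y z
  · exact vacant_flipAt_self hz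
  · exact hy.flipAt_of_ne hyz

lemma constr_emptyBC :
    constr G Λ emptyBC z σ = if ∃ y, G.Adj z y ∧ Vacant σ y then 1 else 0 := by
  have hiff : ∀ y, (if h : y ∈ Λ then σ ⟨y, h⟩ = false else emptyBC y = false) ↔ Vacant σ y :=
    fun y => by by_cases hy : y ∈ Λ <;> simp [Vacant, emptyBC, hy]
  simp only [constr, hiff]

lemma constr_nonneg : 0 ≤ constr G Λ η z σ := by
  unfold constr; split_ifs <;> norm_num

lemma constr_le_one : constr G Λ η z σ ≤ 1 := by
  unfold constr; split_ifs <;> norm_num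

lemma gen_eq_sum_genSummand : gen G Λ p q η f σ = ∑ z, genSummand G Λ p q η f σ z := rfl

lemma genSummand_nonpos (hp : 0 ≤ p) (hq : 0 ≤ q) (hf : f (flipAt Λ σ z) ≤ f σ) :
    genSummand G Λ p q η f σ z ≤ 0 :=
  mul_nonpos_of_nonneg_of_nonpos (mul_nonneg constr_nonneg (rate_nonneg hp hq)) (by linarith)

lemma genSummand_of_eq_true (hz : σ z = true) (hc : constr G Λ η z σ = 1) :
    genSummand G Λ p q η f σ z = q * (f (flipAt Λ σ z) - f σ) := by
  simp [genSummand, hc, rate, hz]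

lemma xi_flipAt_le_of_ne (hy : Vacant σ y) (hd : G.dist x y = xi G Λ x σ) (hyz : y ≠ z) :
    xi G Λ x (flipAt Λ σ z) ≤ xi G Λ x σ :=
  hd ▸ xi_le_dist (hy.flipAt_of_ne hyz)

lemma xi_flipAt_le_of_eq_true [Infinite V] (hz : σ z = true) :
    xi G Λ x (flipAt Λ σ z) ≤ xi G Λ x σ := by
  obtain ⟨y, hy, hd⟩ := exists_vacant_dist_eq_xi G x σ
  exact hd ▸ xi_le_dist (hy.flipAt_of_eq_true hz)

lemma eq_false_and_dist_eq_xi_of_xi_lt [Infinite V] (h : xi G Λ x σ < xi G Λ x (flipAt Λ σ z)) :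
    σ z = false ∧ G.dist x z = xi G Λ x σ := by
  have hz : σ z = false := by
    by_contra hz
    exact h.not_ge (xi_flipAt_le_of_eq_true (by simpa using hz))
  obtain ⟨y, hy, hd⟩ := exists_vacant_dist_eq_xi G x σ
  obtain rfl : y = z := by
    by_contra hyz
    exact h.not_ge (xi_flipAt_le_of_ne hy hd hyz)
  exact ⟨hz, hd⟩

lemma xi_flipAt_le_succ (hz : G.dist x z = xi G Λ x σ) (hc : constr G Λ emptyBC z σ ≠ 0) :
    xi G Λ x (flipAt Λ σ z) ≤ xi G Λ x σ + 1 := by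
  rw [constr_emptyBC] at hc
  obtain ⟨y, hadj, hy⟩ : ∃ y, G.Adj z y ∧ Vacant σ y := by
    by_contra h; simp [h] at hc
  calc xi G Λ x (flipAt Λ σ z) ≤ G.dist x y := xi_le_dist (hy.flipAt_of_ne hadj.ne')
    _ ≤ G.dist x z + G.dist (↑z) y := hadj.reachable.dist_triangle_right x
    _ = xi G Λ x σ + 1 := by rw [hz, SimpleGraph.dist_eq_one_iff_adj.2 hadj]

lemma exists_eq_true_constr_eq_one_xi_flipAt_lt [Infinite V] (hξ : xi G Λ x σ ≠ 0) :
    ∃ b, σ b = true ∧ constr G Λ emptyBC b σ = 1 ∧ xi G Λ x (flipAt Λ σ b) < xi G Λ x σ := by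
  obtain ⟨y, hy, hd⟩ := exists_vacant_dist_eq_xi G x σ
  obtain ⟨b, hadj, hlt⟩ := SimpleGraph.exists_adj_dist_lt (hd ▸ hξ)
  rw [hd] at hlt
  have hb : ¬Vacant σ b := fun hb => hlt.not_ge (xi_le_dist hb)
  obtain ⟨hbΛ, hbσ⟩ : ∃ h : b ∈ Λ, σ ⟨b, h⟩ = true := by simpa [Vacant] using hb
  refine ⟨⟨b, hbΛ⟩, hbσ, ?_, (xi_le_dist (vacant_flipAt_self hbσ)).trans_lt hlt⟩
  rw [constr_emptyBC, if_pos ⟨y, hadj.symm, hy⟩]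

lemma xi_lt_xi_flipAt_of_genSummand_pos (hp : 0 ≤ p) (hq : 0 ≤ q) (hθ : 1 ≤ θ)
    (h : 0 < genSummand G Λ p q η (fun ρ => θ ^ xi G Λ x ρ) σ z) :
    xi G Λ x σ < xi G Λ x (flipAt Λ σ z) :=
  not_le.1 fun hle => h.not_ge (genSummand_nonpos hp hq (pow_le_pow_right₀ hθ hle))

variable [Infinite V]

lemma genSummand_le (hp : 0 ≤ p) (hq : 0 ≤ q) (hθ : 1 ≤ θ) :
    genSummand G Λ p q emptyBC (fun ρ => θ ^ xi G Λ x ρ) σ z ≤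
      p * θ ^ xi G Λ x σ * (θ - 1) := by
  set ξ := xi G Λ x σ
  have hA : 0 ≤ p * θ ^ ξ * (θ - 1) := by have := one_le_pow₀ (n := ξ) hθ; positivity
  by_cases hpos : 0 < genSummand G Λ p q emptyBC (fun ρ => θ ^ xi G Λ x ρ) σ z
  swap
  · exact (not_lt.1 hpos).trans hA
  have hlt := xi_lt_xi_flipAt_of_genSummand_pos hp hq hθ hpos
  obtain ⟨hz, hd⟩ := eq_false_and_dist_eq_xi_of_xi_lt hlt
  have hc : constr G Λ emptyBC z σ ≠ 0 := fun hc => by simp [genSummand, hc] at hpos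
  have hincr : θ ^ xi G Λ x (flipAt Λ σ z) - θ ^ ξ ≤ θ ^ ξ * (θ - 1) := by
    have := pow_le_pow_right₀ hθ (xi_flipAt_le_succ hd hc)
    rw [pow_succ] at this
    linarith
  have hincr_nonneg : 0 ≤ θ ^ xi G Λ x (flipAt Λ σ z) - θ ^ ξ :=
    sub_nonneg.2 (pow_le_pow_right₀ hθ hlt.le)
  calc genSummand G Λ p q emptyBC (fun ρ => θ ^ xi G Λ x ρ) σ z
      = constr G Λ emptyBC z σ * p * (θ ^ xi G Λ x (flipAt Λ σ z) - θ ^ ξ) := by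
        simp [genSummand, rate, hz, ξ]
    _ ≤ 1 * p * (θ ^ ξ * (θ - 1)) := by gcongr; exact constr_le_one
    _ = p * θ ^ ξ * (θ - 1) := by ring

lemma subsingleton_genSummand_pos (hp : 0 ≤ p) (hq : 0 ≤ q) (hθ : 1 ≤ θ) :
    {z | 0 < genSummand G Λ p q η (fun ρ => θ ^ xi G Λ x ρ) σ z}.Subsingleton := by
  intro z hz w hw
  obtain ⟨hwσ, hwd⟩ := eq_false_and_dist_eq_xi_of_xi_lt
    (xi_lt_xi_flipAt_of_genSummand_pos hp hq hθ hw)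
  by_contra hzw
  have hle := xi_flipAt_le_of_ne (vacant_of_eq_false hwσ) hwd fun e => hzw (Subtype.ext e).symm
  exact (xi_lt_xi_flipAt_of_genSummand_pos hp hq hθ hz).not_ge hle

lemma sum_genSummand_le (hp : 0 ≤ p) (hq : 0 ≤ q) (hθ : 1 ≤ θ) (s : Finset {x : V // x ∈ Λ}) :
    ∑ z ∈ s, genSummand G Λ p q emptyBC (fun ρ => θ ^ xi G Λ x ρ) σ z ≤
      p * θ ^ xi G Λ x σ * (θ - 1) :=
  s.sum_le_of_le_of_subsingleton_pos (by have := one_le_pow₀ (n := xi G Λ x σ) hθ; positivity)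
    (fun _ _ => genSummand_le hp hq hθ) (subsingleton_genSummand_pos hp hq hθ)

end

theorem statement11_general [Infinite V] (G : SimpleGraph V)
    (Λ : Finset V) (x : V)
    (θ p q : ℝ) (hθ : 1 < θ) (hp : p ∈ Set.Icc (0:ℝ) 1) (hq : q ∈ Set.Icc (0:ℝ) 1)
    (σ : Conf Λ) :
    gen G Λ p q emptyBC (fun ρ => θ ^ xi G Λ x ρ) σ ≤
      ((θ - 1) / θ) * ((p * θ - q) * θ ^ xi G Λ x σ + q) := by
  set ξ := xi G Λ x σ
  have hθ0 : 0 < θ := by linarith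
  rw [gen_eq_sum_genSummand]
  obtain hξ | hξ := eq_or_ne ξ 0
  · calc _ ≤ p * θ ^ ξ * (θ - 1) := sum_genSummand_le hp.1 hq.1 hθ.le _
      _ = _ := by rw [hξ]; field_simp; ring
  obtain ⟨b, hb, hcb, hlt⟩ := exists_eq_true_constr_eq_one_xi_flipAt_lt hξ
  obtain ⟨n, hn⟩ := Nat.exists_eq_succ_of_ne_zero hξ
  have hbterm :
      genSummand G Λ p q emptyBC (fun ρ => θ ^ xi G Λ x ρ) σ b ≤ q * (θ ^ n - θ ^ ξ) := by
    rw [genSummand_of_eq_true hb hcb]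
    have hle : xi G Λ x (flipAt Λ σ b) ≤ n := by omega
    exact mul_le_mul_of_nonneg_left (sub_le_sub_right (pow_le_pow_right₀ hθ.le hle) _) hq.1
  have hslack : ((θ - 1) / θ) * ((p * θ - q) * θ ^ ξ + q) =
      q * (θ ^ n - θ ^ ξ) + p * θ ^ ξ * (θ - 1) + q * (θ - 1) / θ := by
    rw [hn, pow_succ]; field_simp; ring
  calc _ = _ + ∑ z ∈ Finset.univ.erase b, _ := (Finset.add_sum_erase _ _ (Finset.mem_univ b)).symm
    _ ≤ q * (θ ^ n - θ ^ ξ) + p * θ ^ ξ * (θ - 1) :=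
      add_le_add hbterm (sum_genSummand_le hp.1 hq.1 hθ.le _)
    _ ≤ _ := by
      rw [hslack, le_add_iff_nonneg_right]
      exact div_nonneg (mul_nonneg hq.1 (by linarith)) hθ0.le

/-- **Pointwise generator bound (key estimate in the proof of Proposition 4.1).** For
`g(σ) = θ^{ξ^x(σ)}` one has `(L_Λ g)(σ) ≤ ((θ-1)/θ)((pθ-q) g(σ) + q)` for every `σ`. -/
theorem statement11 [Infinite V] (G : SimpleGraph V)
    (hloc : ∀ v : V, (G.neighborSet v).Finite) (hconn : G.Connected)
    (Λ : Finset V) (x : V) (hx : x ∈ Λ)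
    (θ p q : ℝ) (hθ : 1 < θ) (hp : p ∈ Set.Icc (0:ℝ) 1) (hq : q ∈ Set.Icc (0:ℝ) 1)
    (hpq : p + q = 1) (σ : Conf Λ) :
    gen G Λ p q emptyBC (fun ρ => θ ^ xi G Λ x ρ) σ ≤
      ((θ - 1) / θ) * ((p * θ - q) * θ ^ xi G Λ x σ + q) :=
  statement11_general G Λ x θ p q hθ hp hq σ

end FA1f
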